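/- arXiv:2401.04358 — 3 statements merged into one kernel-verified Lean document; each statement's English description precedes it below -/
import Mathlib

section
/- Let N be a positive even integer. Let Φ be the N×N discrete Fresnel transform matrix with entries Φ_{m,n} = (1/√N)·exp(−i·π/4)·exp(i·π·(m−n)²/N), and let Δ be the N×N diagonal matrix with Δ_{n,n} = exp(i·2π·n/N). Then for all m, n in {0,…,N−1}, the (m,n) entry of Φ·Δ·Φ^H equals exp(i·π·(m²−n²)/N) if m ≡ n+1 (mod N), and equals 0 otherwise. -/
open Matrix Complex Real

/-- The N×N discrete Fresnel transform (DFnT) matrix with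
Φ_{m,n} = (1/√N)·exp(−i·π/4)·exp(i·π·(m−n)²/N). -/
noncomputable def PhiMat (N : ℕ) : Matrix (Fin N) (Fin N) ℂ :=
  Matrix.of fun m n =>
    (1 / Real.sqrt N : ℂ) * Complex.exp (-(Real.pi / 4) * Complex.I) *
      Complex.exp (Real.pi * Complex.I * (((m : ℕ) : ℤ) - ((n : ℕ) : ℤ)) ^ 2 / N)

/-- The N×N diagonal "Doppler-shift" matrix Δ with Δ_{n,n} = exp(i·2π·n/N). -/
noncomputable def DeltaMat (N : ℕ) : Matrix (Fin N) (Fin N) ℂ :=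
  Matrix.diagonal fun n => Complex.exp (2 * Real.pi * Complex.I * (n : ℕ) / N)

/-- The N×N cyclic-shift permutation matrix Π with Π_{m,n} = 1 if m ≡ n+1 (mod N). -/
def PiMat (N : ℕ) : Matrix (Fin N) (Fin N) ℂ :=
  Matrix.of fun m n => if (m : ℕ) = ((n : ℕ) + 1) % N then 1 else 0

/-!
Expanding the product, `Φ m k · conj (Φ n k)` is `exp (iπ((m-k)² - (n-k)²)/N) / N`, and
`(m-k)² - (n-k)² = m² - n² - 2k(m-n)`. Together with the phase `exp (2πik/N)` of `Δ`, the `(m, n)`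
entry is `exp (iπ(m² - n²)/N) / N` times the geometric sum `∑ₖ exp (2πi(1+n-m)k/N)`, which is `N`
when `N ∣ 1 + n - m`, i.e. when `m ≡ n + 1 (mod N)`, and `0` otherwise.
-/

lemma Complex.sum_exp_two_pi_mul_I_int_mul_div (N : ℕ) (a : ℤ) :
    ∑ k : Fin N, Complex.exp (2 * π * I * a * (k : ℕ) / N) =
      if (N : ℤ) ∣ a then (N : ℂ) else 0 := by
  rcases Nat.eq_zero_or_pos N with rfl | hN
  · simp
  have hω := Complex.isPrimitiveRoot_exp N hN.ne'
  set ζ := Complex.exp (2 * π * I / N) ^ a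
  have hterm (k : ℕ) : Complex.exp (2 * π * I * a * k / N) = ζ ^ k := by
    rw [← zpow_natCast, ← _root_.zpow_mul, ← Complex.exp_int_mul]
    push_cast
    ring_nf
  simp only [hterm, Fin.sum_univ_eq_sum_range (ζ ^ ·)]
  split_ifs with hdvd
  · simp [ζ, (hω.zpow_eq_one_iff_dvd a).2 hdvd]
  · have hζN : ζ ^ N = 1 := by
      rw [← zpow_natCast, ← _root_.zpow_mul, mul_comm a, _root_.zpow_mul, zpow_natCast,
        hω.pow_eq_one, _root_.one_zpow]
    rw [geom_sum_eq (mt (hω.zpow_eq_one_iff_dvd a).1 hdvd), hζN, sub_self, zero_div]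

lemma Fin.intCast_dvd_one_add_sub_iff {N : ℕ} (m n : Fin N) :
    (N : ℤ) ∣ 1 + (n : ℕ) - (m : ℕ) ↔ (m : ℕ) = ((n : ℕ) + 1) % N := by
  rw [add_comm, ← Int.modEq_iff_dvd, Int.ModEq,
    Int.emod_eq_of_lt (by positivity) (by exact_mod_cast m.isLt)]
  exact_mod_cast Iff.rfl

lemma PhiMat_apply_mul_star_PhiMat_apply (N : ℕ) (m n k : Fin N) :
    PhiMat N m k * star (PhiMat N n k) =
      Complex.exp (π * I * ((((m : ℕ) : ℤ) - (k : ℕ)) ^ 2 - (((n : ℕ) : ℤ) - (k : ℕ)) ^ 2) / N) /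
        N := by
  have hnorm : (1 / Real.sqrt N : ℂ) * star (1 / Real.sqrt N : ℂ) = 1 / N := by
    rw [Complex.star_def, map_div₀, map_one, Complex.conj_ofReal, div_mul_div_comm, one_mul,
      ← Complex.ofReal_mul, Real.mul_self_sqrt (Nat.cast_nonneg N), Complex.ofReal_natCast]
  have hphase : Complex.exp (-(π / 4) * I) * star (Complex.exp (-(π / 4) * I)) = 1 := by
    rw [Complex.star_def, ← Complex.exp_conj, ← Complex.exp_add]
    simp [map_ofNat]
  simp only [PhiMat, of_apply, star_mul']
  calc _ = ((1 / Real.sqrt N : ℂ) * star (1 / Real.sqrt N : ℂ)) *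
        (Complex.exp (-(π / 4) * I) * star (Complex.exp (-(π / 4) * I))) *
        (Complex.exp (π * I * (((m : ℕ) : ℤ) - ((k : ℕ) : ℤ)) ^ 2 / N) *
          star (Complex.exp (π * I * (((n : ℕ) : ℤ) - ((k : ℕ) : ℤ)) ^ 2 / N))) := by ring
    _ = _ := by
      rw [hnorm, hphase, mul_one, one_div, inv_mul_eq_div, Complex.star_def, ← Complex.exp_conj,
        ← Complex.exp_add]
      congr 2
      simp only [map_div₀, map_mul, map_pow, map_sub, map_natCast, conj_ofReal, conj_I,
        Int.cast_natCast]
      ring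

lemma PhiMat_mul_DeltaMat_mul_conjTranspose_apply (N : ℕ) (m n : Fin N) :
    (PhiMat N * DeltaMat N * (PhiMat N)ᴴ) m n =
      Complex.exp (π * I * ((((m : ℕ) : ℤ) ^ 2 - ((n : ℕ) : ℤ) ^ 2)) / N) / N *
        ∑ k : Fin N, Complex.exp (2 * π * I * (1 + (n : ℕ) - (m : ℕ) : ℤ) * (k : ℕ) / N) := by
  rw [mul_apply, Finset.mul_sum]
  refine Finset.sum_congr rfl fun k _ => ?_
  rw [DeltaMat, mul_diagonal, conjTranspose_apply, mul_right_comm,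
    PhiMat_apply_mul_star_PhiMat_apply, div_mul_eq_mul_div, div_mul_eq_mul_div,
    ← Complex.exp_add, ← Complex.exp_add]
  congr 2
  push_cast
  ring

theorem stmt3_general (N : ℕ) (m n : Fin N) :
    (PhiMat N * DeltaMat N * (PhiMat N)ᴴ) m n =
      if (m : ℕ) = ((n : ℕ) + 1) % N then
        Complex.exp (Real.pi * Complex.I * ((((m : ℕ) : ℤ) ^ 2 - ((n : ℕ) : ℤ) ^ 2)) / N)
      else 0 := by
  have hN : (N : ℂ) ≠ 0 := by exact_mod_cast m.pos.ne'
  simp only [PhiMat_mul_DeltaMat_mul_conjTranspose_apply,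
    Complex.sum_exp_two_pi_mul_I_int_mul_div, Fin.intCast_dvd_one_add_sub_iff]
  split_ifs
  · field_simp
  · simp

theorem stmt3 (N : ℕ) (hN : 0 < N) (hNeven : Even N) (m n : Fin N) :
    (PhiMat N * DeltaMat N * (PhiMat N)ᴴ) m n =
      if (m : ℕ) = ((n : ℕ) + 1) % N then
        Complex.exp (Real.pi * Complex.I * ((((m : ℕ) : ℤ) ^ 2 - ((n : ℕ) : ℤ) ^ 2)) / N)
      else 0 :=
  stmt3_general N m n
end

section
/- Let N be a positive even integer and k, l integers. Let Φ be the N×N discrete Fresnel transform matrix with entries Φ_{m,n} = (1/√N)·exp(−i·π/4)·exp(i·π·(m−n)²/N), let Δ be the N×N diagonal matrix with Δ_{n,n} = exp(i·2π·n/N), and let Π be the N×N cyclic-shift permutation matrix with Π_{m,n} = 1 if m ≡ n+1 (mod N) and 0 otherwise. Then Φ·Δ^k·Π^l·Φ^H = exp(−i·π·k²/N)·Δ^k·Π^{k+l}, where the matrix powers are integer (possibly negative) powers of the invertible matrices Δ and Π, and Φ^H is the conjugate transpose of Φ. -/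
open Matrix Complex Real

/-! Work in the unit group of `N × N` complex matrices and put `w = exp (-iπ/N)`, a central unit.
Three relations hold: `Π Δ = w² Δ Π`, `Φ Δ Φᴴ = w Δ Π` and `Φ Π = Π Φ`. The last two rest on `N`
being even: then `exp (iπ a² / N)` depends only on `a mod N`, so `Φ` is a circulant matrix.
In any group these relations with `w` central force `Φ Δ^k Π^l Φ⁻¹ = w^(k²) Δ^k Π^(k+l)`,
by induction on `k`. Finally `Φᴴ = Φ⁻¹` is the orthogonality of the `N`-th roots of unity. -/

section CentralCommutation

variable {G : Type*} [Group G] {p d q c : G}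

theorem zpow_mul_eq_of_mul_eq_central (hc : ∀ g, Commute c g) (h : q * d = c * d * q) (j : ℤ) :
    q ^ j * d = c ^ j * d * q ^ j := by
  have hdq : SemiconjBy d q (c⁻¹ * q) := by
    unfold SemiconjBy
    rw [mul_assoc, h]
    group
  have h' := (hdq.zpow_right j).eq
  rw [(hc q).inv_left.mul_zpow] at h'
  rw [mul_assoc, h']
  group

theorem conj_zpow_eq_of_mul_eq_central (hc : ∀ g, Commute c g) (hqd : q * d = c ^ 2 * d * q)
    (hpd : p * d * p⁻¹ = c * d * q) (k : ℤ) :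
    p * d ^ k * p⁻¹ = c ^ (k ^ 2) * d ^ k * q ^ k := by
  -- `(k + 1)² = k² + 1 + 2k`: one `c` comes from `p d p⁻¹`, and `2k` from moving `d` past `q ^ k`.
  have step (k : ℤ) : c ^ (k ^ 2) * d ^ k * q ^ k * (c * d * q) =
      c ^ ((k + 1) ^ 2) * d ^ (k + 1) * q ^ (k + 1) :=
    calc c ^ (k ^ 2) * d ^ k * q ^ k * (c * d * q)
        = c ^ (k ^ 2) * d ^ k * c * (q ^ k * d) * q := by
          simp only [mul_assoc, (hc (q ^ k)).left_comm]
      _ = c ^ (k ^ 2) * (d ^ k * (c * (c ^ 2) ^ k)) * d * q ^ k * q := by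
          rw [zpow_mul_eq_of_mul_eq_central (fun g => (hc g).pow_left 2) hqd]
          group
      _ = c ^ ((k + 1) ^ 2) * d ^ (k + 1) * q ^ (k + 1) := by
          rw [← ((hc _).mul_left (((hc _).pow_left 2).zpow_left _)).eq]
          group
  have conj_succ (k : ℤ) : p * d ^ (k + 1) * p⁻¹ = p * d ^ k * p⁻¹ * (p * d * p⁻¹) := by group
  induction k using Int.induction_on with
  | zero => simp
  | succ i ih => rw [conj_succ, ih, hpd, step]
  | pred i ih =>
    have h := conj_succ (-i - 1)
    rw [sub_add_cancel, ih, hpd, ← sub_add_cancel (-(i : ℤ)) 1, ← step, sub_add_cancel] at h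
    exact (mul_right_cancel h).symm

theorem conj_zpow_mul_zpow_eq_of_mul_eq_central (hc : ∀ g, Commute c g)
    (hqd : q * d = c ^ 2 * d * q) (hpd : p * d * p⁻¹ = c * d * q) (hpq : Commute p q) (k l : ℤ) :
    p * d ^ k * q ^ l * p⁻¹ = c ^ (k ^ 2) * d ^ k * q ^ (k + l) :=
  calc p * d ^ k * q ^ l * p⁻¹ = p * d ^ k * p⁻¹ * (p * q ^ l * p⁻¹) := by group
    _ = c ^ (k ^ 2) * d ^ k * q ^ (k + l) := by
      rw [conj_zpow_eq_of_mul_eq_central hc hqd hpd, (hpq.zpow_right l).eq, mul_inv_cancel_right,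
        mul_assoc _ (q ^ k), ← _root_.zpow_add]

end CentralCommutation

theorem Units.val_conj_zpow_mul_zpow_eq_smul {R A : Type*} [CommSemiring R] [Semiring A]
    [Algebra R A] {p d q : Aˣ} {w : Rˣ} (hqd : (q : A) * d = (w : R) ^ 2 • ((d : A) * q))
    (hpd : (p : A) * d = (w : R) • ((d : A) * q * p)) (hpq : Commute p q) (k l : ℤ) :
    ((p * d ^ k * q ^ l * p⁻¹ : Aˣ) : A) =
      ((w ^ (k ^ 2) : Rˣ) : R) • ((d ^ k * q ^ (k + l) : Aˣ) : A) := by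
  let z := Units.map (algebraMap R A).toMonoidHom w
  have hz (g : Aˣ) : Commute z g := Units.ext (Algebra.commutes _ _)
  have hqd' : q * d = z ^ 2 * d * q := Units.ext <| by
    simp only [Units.val_mul, Units.val_pow_eq_pow_val, hqd, Algebra.smul_def, mul_assoc, z,
      Units.coe_map, map_pow]
    rfl
  have hpd' : p * d * p⁻¹ = z * d * q := mul_inv_eq_of_eq_mul <| Units.ext <| by
    simp only [Units.val_mul, hpd, Algebra.smul_def, mul_assoc, z, Units.coe_map]
    rfl
  rw [conj_zpow_mul_zpow_eq_of_mul_eq_central hz hqd' hpd' hpq, mul_assoc, Units.val_mul,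
    Algebra.smul_def, ← map_zpow]
  rfl

theorem Int.sq_modEq_sq_of_even {n a b : ℤ} (hn : Even n) (h : a ≡ b [ZMOD n]) :
    a ^ 2 ≡ b ^ 2 [ZMOD 2 * n] := by
  obtain ⟨m, rfl⟩ := hn
  obtain ⟨t, ht⟩ := Int.modEq_iff_dvd.mp h
  refine Int.modEq_iff_dvd.mpr ⟨a * t + m * t ^ 2, ?_⟩
  rw [show b = a + (m + m) * t by linarith]
  ring

theorem Fin.intCast_val_sub_modEq {N : ℕ} (a b : Fin N) :
    (((a - b : Fin N) : ℕ) : ℤ) ≡ (a : ℕ) - (b : ℕ) [ZMOD N] := by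
  rw [Fin.val_sub, Int.natCast_mod, Nat.cast_add, Nat.cast_sub b.isLt.le]
  exact (Int.mod_modEq _ _).trans (Int.modEq_iff_dvd.mpr ⟨-1, by ring⟩)

theorem Fin.intCast_val_sub_one_modEq {N : ℕ} [NeZero N] (a : Fin N) :
    (((a - 1 : Fin N) : ℕ) : ℤ) ≡ (a : ℕ) - 1 [ZMOD N] := by
  refine (Fin.intCast_val_sub_modEq a 1).trans (Int.ModEq.sub_left _ ?_)
  rw [Fin.val_one', Int.natCast_mod, Nat.cast_one]
  exact Int.mod_modEq _ _

theorem Fin.natCast_dvd_intCast_val_sub_iff {N : ℕ} (a b : Fin N) :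
    (N : ℤ) ∣ (a : ℕ) - (b : ℕ) ↔ a = b := by
  refine ⟨fun h => Fin.ext ?_, fun h => by simp [h]⟩
  have := Int.eq_zero_of_abs_lt_dvd h (by rw [abs_lt]; omega)
  omega

theorem Complex.exp_pi_mul_I_div_eq_of_modEq {N : ℕ} {a b : ℤ} (h : a ≡ b [ZMOD 2 * N]) :
    cexp (π * I * a / N) = cexp (π * I * b / N) := by
  rcases eq_or_ne N 0 with rfl | hN
  · simp
  obtain ⟨t, ht⟩ := Int.modEq_iff_dvd.mp h
  rw [Complex.exp_eq_exp_iff_exists_int]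
  refine ⟨-t, ?_⟩
  rw [show (a : ℂ) = b - 2 * N * t by exact_mod_cast (by linarith : a = b - 2 * N * t)]
  field_simp
  push_cast
  ring

theorem IsPrimitiveRoot.sum_range_zpow_pow {K : Type*} [Field K] {ζ : K} {N : ℕ}
    (hζ : IsPrimitiveRoot ζ N) (a : ℤ) :
    ∑ j ∈ Finset.range N, (ζ ^ a) ^ j = if (N : ℤ) ∣ a then (N : K) else 0 := by
  split_ifs with h
  · obtain ⟨t, rfl⟩ := h
    simp [_root_.zpow_mul, hζ.pow_eq_one]
  · have hζa : ζ ^ a ≠ 1 := mt (hζ.zpow_eq_one_iff_dvd a).mp h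
    rw [geom_sum_eq hζa, ← zpow_natCast, ← _root_.zpow_mul, mul_comm, _root_.zpow_mul,
      zpow_natCast, hζ.pow_eq_one, _root_.one_zpow, sub_self, zero_div]

noncomputable def fresnelChirp (N : ℕ) (x : Fin N) : ℂ :=
  (1 / √N : ℂ) * cexp (-(π / 4) * I) * cexp (π * I * (((x : ℕ) : ℤ) : ℂ) ^ 2 / N)

theorem phiMat_eq_circulant {N : ℕ} (hN : Even N) : PhiMat N = circulant (fresnelChirp N) := by
  ext m n
  have h := exp_pi_mul_I_div_eq_of_modEq
    (Int.sq_modEq_sq_of_even hN.natCast (Fin.intCast_val_sub_modEq m n).symm)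
  simp only [PhiMat, of_apply, circulant_apply, fresnelChirp]
  push_cast at h ⊢
  rw [h]

theorem phiMat_mul_star_phiMat_apply (N : ℕ) (m n j : Fin N) :
    PhiMat N m j * star (PhiMat N n j) =
      1 / N * cexp (π * I * (((m : ℕ) : ℂ) ^ 2 - ((n : ℕ) : ℂ) ^ 2) / N) *
        (cexp (2 * π * I / N) ^ (((n : ℕ) : ℤ) - (m : ℕ))) ^ (j : ℕ) := by
  simp only [PhiMat, of_apply, Complex.star_def, map_mul, ← Complex.exp_conj, map_div₀, map_one,
    Complex.conj_ofReal, map_neg, Complex.conj_I, map_pow, map_sub, map_natCast, map_intCast,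
    map_ofNat]
  rw [← Complex.exp_int_mul, ← Complex.exp_nat_mul]
  have hsq : (1 / √N : ℂ) * (1 / √N) = 1 / N := by
    rw [one_div_mul_one_div, ← Complex.ofReal_mul, Real.mul_self_sqrt (Nat.cast_nonneg _),
      Complex.ofReal_natCast]
  calc _ = (1 / √N : ℂ) * (1 / √N) *
        cexp (-(π / 4) * I + π * I * ((((m : ℕ) : ℤ) : ℂ) - (((j : ℕ) : ℤ) : ℂ)) ^ 2 / N +
          -(π / 4) * -I + π * -I * ((((n : ℕ) : ℤ) : ℂ) - (((j : ℕ) : ℤ) : ℂ)) ^ 2 / N) := by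
        simp only [Complex.exp_add]
        ring
    _ = _ := by
        rw [hsq, mul_assoc (1 / (N : ℂ)), ← Complex.exp_add]
        congr 2
        push_cast
        ring

theorem phiMat_mul_conjTranspose (N : ℕ) [NeZero N] : PhiMat N * (PhiMat N)ᴴ = 1 := by
  ext m n
  simp only [mul_apply, conjTranspose_apply, phiMat_mul_star_phiMat_apply, one_apply]
  rw [← Finset.mul_sum, Fin.sum_univ_eq_sum_range (fun j => (_ ^ _) ^ j),
    (Complex.isPrimitiveRoot_exp N (NeZero.ne N)).sum_range_zpow_pow]
  by_cases h : m = n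
  · rw [if_pos ((Fin.natCast_dvd_intCast_val_sub_iff n m).mpr h.symm), if_pos h]
    subst h
    simp [NeZero.ne N]
  · rw [if_neg (mt (Fin.natCast_dvd_intCast_val_sub_iff n m).mp (Ne.symm h)), if_neg h, mul_zero]

theorem isUnit_deltaMat (N : ℕ) : IsUnit (DeltaMat N) :=
  isUnit_diagonal.mpr (Pi.isUnit_iff.mpr fun _ => (Complex.exp_ne_zero _).isUnit)

section

variable {N : ℕ} [NeZero N]

theorem piMat_eq_permMatrix : PiMat N = Equiv.Perm.permMatrix ℂ (Equiv.subRight (1 : Fin N)) := by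
  ext m n
  have hshift : (m : ℕ) = ((n : ℕ) + 1) % N ↔ m - 1 = n := by
    rw [sub_eq_iff_eq_add, Fin.ext_iff, Fin.val_add, Fin.val_one', Nat.add_mod_mod]
  simp only [PiMat, of_apply, Equiv.Perm.permMatrix, PEquiv.toMatrix_apply, Equiv.toPEquiv_apply,
    Option.mem_def, Option.some.injEq, Equiv.subRight_apply, hshift]

theorem isUnit_piMat : IsUnit (PiMat N) := by
  refine IsUnit.of_mul_eq_one (Equiv.Perm.permMatrix ℂ (Equiv.subRight (1 : Fin N))⁻¹) ?_
  rw [piMat_eq_permMatrix, ← permMatrix_mul, inv_mul_cancel, permMatrix_one]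

theorem mul_piMat_apply (M : Matrix (Fin N) (Fin N) ℂ) (i j : Fin N) :
    (M * PiMat N) i j = M i (j + 1) := by
  simp only [piMat_eq_permMatrix, PEquiv.mul_toMatrix_toPEquiv, submatrix_apply, id_eq,
    Equiv.subRight_symm_apply]

theorem piMat_mul_apply (M : Matrix (Fin N) (Fin N) ℂ) (i j : Fin N) :
    (PiMat N * M) i j = M (i - 1) j := by
  simp only [piMat_eq_permMatrix, PEquiv.toMatrix_toPEquiv_mul, submatrix_apply,
    Equiv.subRight_apply, id_eq]

theorem phiMat_mul_piMat (hN : Even N) : PhiMat N * PiMat N = PiMat N * PhiMat N := by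
  ext i j
  rw [mul_piMat_apply, piMat_mul_apply, phiMat_eq_circulant hN, circulant_apply, circulant_apply,
    sub_add_eq_sub_sub, sub_right_comm]

theorem piMat_mul_deltaMat :
    PiMat N * DeltaMat N = cexp (-(2 * π * I / N)) • (DeltaMat N * PiMat N) := by
  ext i j
  rw [piMat_mul_apply, Matrix.smul_apply, mul_piMat_apply, DeltaMat, diagonal_apply,
    diagonal_apply, smul_eq_mul]
  by_cases h : i - 1 = j
  · rw [if_pos h, if_pos (sub_eq_iff_eq_add.mp h), ← Complex.exp_add]
    convert exp_pi_mul_I_div_eq_of_modEq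
      ((Fin.intCast_val_sub_one_modEq i).mul_left' (c := 2)) using 2 <;> push_cast <;> ring
  · rw [if_neg h, if_neg (mt sub_eq_iff_eq_add.mpr h), mul_zero]

theorem phiMat_mul_deltaMat (hN : Even N) :
    PhiMat N * DeltaMat N = cexp (-(π * I / N)) • (DeltaMat N * PiMat N * PhiMat N) := by
  ext i j
  rw [Matrix.smul_apply, mul_assoc, DeltaMat, mul_diagonal, diagonal_mul, piMat_mul_apply,
    phiMat_eq_circulant hN, circulant_apply, circulant_apply, fresnelChirp, fresnelChirp,
    smul_eq_mul]
  -- `(i - j)² + 2j = -1 + 2i + (i - 1 - j)²`, and each square only matters mod `2N`.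
  have hphase : (((i - j : Fin N) : ℕ) : ℤ) ^ 2 + 2 * (j : ℕ) ≡
      -1 + 2 * (i : ℕ) + (((i - 1 - j : Fin N) : ℕ) : ℤ) ^ 2 [ZMOD 2 * N] := by
    have h1 := Int.sq_modEq_sq_of_even hN.natCast (Fin.intCast_val_sub_modEq i j)
    have h2 := Int.sq_modEq_sq_of_even hN.natCast
      ((Fin.intCast_val_sub_modEq (i - 1) j).trans
        ((Fin.intCast_val_sub_one_modEq i).sub_right _))
    calc _ ≡ ((i : ℕ) - (j : ℕ) : ℤ) ^ 2 + 2 * (j : ℕ) [ZMOD 2 * N] := h1.add_right _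
      _ = -1 + 2 * (i : ℕ) + ((i : ℕ) - 1 - (j : ℕ) : ℤ) ^ 2 := by ring
      _ ≡ _ [ZMOD 2 * N] := (h2.add_left _).symm
  have key : cexp (π * I * ((((i - j : Fin N) : ℕ) : ℤ) : ℂ) ^ 2 / N) *
        cexp (2 * π * I * (j : ℕ) / N) =
      cexp (-(π * I / N)) * cexp (2 * π * I * (i : ℕ) / N) *
        cexp (π * I * ((((i - 1 - j : Fin N) : ℕ) : ℤ) : ℂ) ^ 2 / N) := by
    simp only [← Complex.exp_add]
    convert exp_pi_mul_I_div_eq_of_modEq hphase using 2 <;> push_cast <;> ring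
  linear_combination (1 / √N : ℂ) * cexp (-(π / 4) * I) * key

end

theorem stmt9 (N : ℕ) (hN : 0 < N) (hNeven : Even N) (k l : ℤ) :
    PhiMat N * DeltaMat N ^ k * PiMat N ^ l * (PhiMat N)ᴴ =
      Complex.exp (-(Real.pi * Complex.I * (k : ℂ) ^ 2 / N)) •
        (DeltaMat N ^ k * PiMat N ^ (k + l)) := by
  have : NeZero N := ⟨hN.ne'⟩
  let w := Units.mk0 _ (Complex.exp_ne_zero (-(π * I / N)))
  have hw (n : ℤ) : ((w ^ n : ℂˣ) : ℂ) = cexp (-(π * I * n / N)) := by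
    rw [Units.val_zpow_eq_zpow_val, Units.val_mk0, ← Complex.exp_int_mul]
    ring_nf
  have hqd : PiMat N * DeltaMat N = (w : ℂ) ^ 2 • (DeltaMat N * PiMat N) := by
    rw [← zpow_natCast, ← Units.val_zpow_eq_zpow_val, hw, piMat_mul_deltaMat]
    congr 2
    push_cast
    ring
  let p : (Matrix (Fin N) (Fin N) ℂ)ˣ := ⟨PhiMat N, (PhiMat N)ᴴ, phiMat_mul_conjTranspose N,
    mul_eq_one_comm.mp (phiMat_mul_conjTranspose N)⟩
  have key := Units.val_conj_zpow_mul_zpow_eq_smul (p := p) (d := (isUnit_deltaMat N).unit)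
    (q := isUnit_piMat.unit) (w := w) (by simpa using hqd)
    (by simpa [w] using phiMat_mul_deltaMat hNeven) (Units.ext (phiMat_mul_piMat hNeven)) k l
  simpa [p, coe_units_zpow, hw] using key
end

section
/- Let N be a positive even integer, κ a real number that is not an integer, and k, l integers. Let Φ be the N×N discrete Fresnel transform matrix with entries Φ_{m,n} = (1/√N)·exp(−i·π/4)·exp(i·π·(m−n)²/N), Δ the N×N diagonal matrix with Δ_{n,n} = exp(i·2π·n/N), Π the N×N cyclic-shift permutation matrix with Π_{m,n} = 1 if m ≡ n+1 (mod N) and 0 otherwise, and D_κ the diagonal matrix with (D_κ)_{n,n} = exp(i·2π·κ·n/N). For each integer m set λ_m = (1/N)·(exp(i·2π·κ) − 1)/(exp(i·2π·(κ−m)/N) − 1). Then Φ·Δ^k·D_κ·Π^l·Φ^H = Σ_{m=−N/2}^{N/2−1} λ_m·exp(−i·π·(k+m)²/N)·Δ^{k+m}·Π^{k+m+l}, where Φ^H is the conjugate transpose of Φ and the matrix powers are integer powers of the invertible matrices Δ and Π. -/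
/-!
Write `ψ x = exp (iπx/N)`. Because `N` is even, the chirp `x ↦ ψ (x²)` is `N`-periodic on `ℤ`, so
`Φ` is circulant and every sum over a full residue system can be collapsed onto a single
residue. On the left, with `d = p - q - l`, entry `(p, q)` becomes
`(1/N) ψ (d (p + q + l)) ∑_{m < N} r^m` with `r = ψ (2 (κ + k - d))`; this is a geometric sum
equal to `(e^{2πiκ} - 1) / (r - 1)`, and `r ≠ 1` because `κ ∉ ℤ`. On the right, the summands are
`N`-periodic in `m` and the window `[-N/2, N/2)` is a full residue system, so only `m ≡ d - k`
survives; it gives the same value because `-d² + 2dp = d (p + q + l)`.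
-/

open Matrix Complex Real

/-- The diagonal fractional-Doppler matrix D_κ with (D_κ)_{n,n} = exp(i·2π·κ·n/N). -/
noncomputable def DFracMat (N : ℕ) (κ : ℝ) : Matrix (Fin N) (Fin N) ℂ :=
  Matrix.diagonal fun n =>
    Complex.exp (2 * Real.pi * Complex.I * (κ : ℂ) * ((n : ℕ) : ℂ) / N)

open Finset Function

/-- All exponentials in the Fresnel-domain formula are `phase N x = exp (iπx/N)` for some `x`. -/
noncomputable def phase (N : ℕ) (x : ℂ) : ℂ := Complex.exp (π * I * x / N)

section Phase

variable {N : ℕ}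

lemma phase_add (x y : ℂ) : phase N (x + y) = phase N x * phase N y := by
  rw [phase, phase, phase, ← Complex.exp_add]
  ring_nf

lemma phase_natCast_mul (n : ℕ) (x : ℂ) : phase N (n * x) = phase N x ^ n := by
  rw [phase, phase, ← Complex.exp_nat_mul]
  ring_nf

lemma phase_eq_of_eq_add (t : ℤ) {x y : ℂ} (h : x = y + 2 * N * t) : phase N x = phase N y := by
  rcases eq_or_ne N 0 with rfl | hN
  · simp [phase]
  have hN' : (N : ℂ) ≠ 0 := Nat.cast_ne_zero.mpr hN
  rw [h, phase_add, phase, phase, show π * I * (2 * N * t) / N = t * (2 * π * I) by field_simp,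
    Complex.exp_int_mul_two_pi_mul_I, mul_one]

lemma phase_eq_one_iff (hN : N ≠ 0) (x : ℂ) : phase N x = 1 ↔ ∃ t : ℤ, x = 2 * N * t := by
  have hN' : (N : ℂ) ≠ 0 := Nat.cast_ne_zero.mpr hN
  rw [phase, Complex.exp_eq_one_iff]
  refine exists_congr fun t => ⟨fun h => ?_, fun h => ?_⟩
  · field_simp at h
    linear_combination h
  · rw [h]
    field_simp

lemma star_phase (x : ℂ) : star (phase N x) = phase N (-star x) := by
  rw [phase, phase, Complex.star_def, ← Complex.exp_conj]
  congr 1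
  simp [map_div₀]

lemma exp_two_pi_mul_I_mul_div_eq_phase (x : ℂ) :
    Complex.exp (2 * π * I * x / N) = phase N (2 * x) := by
  rw [phase]
  ring_nf

/-- `a (x + N)² - a x² = 2N · a (x + N/2)`, which lies in `2Nℤ` because `N` is even. -/
lemma phase_intCast_mul_sq_periodic (hN : Even N) (a : ℤ) :
    Periodic (fun x : ℤ => phase N (a * (x : ℂ) ^ 2)) N := by
  obtain ⟨u, hu⟩ := hN
  intro x
  exact phase_eq_of_eq_add (a * (x + u)) (by push_cast; rw [hu]; push_cast; ring)

lemma exp_neg_sq_periodic (hN : Even N) (k : ℤ) :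
    Periodic (fun m : ℤ => Complex.exp (-(π * I * ((k + m : ℤ) : ℂ) ^ 2 / N))) N := by
  intro m
  have h := phase_intCast_mul_sq_periodic hN (-1) (k + m)
  simp only [phase] at h
  convert h using 2 <;> push_cast <;> ring

lemma phase_two_mul_ne_one (hN : 0 < N) {κ : ℝ} (hκ : ∀ z : ℤ, κ ≠ z) (j : ℤ) :
    phase N (2 * (κ + j)) ≠ 1 := by
  rw [Ne, phase_eq_one_iff hN.ne']
  rintro ⟨t, ht⟩
  apply hκ (N * t - j)
  have := congrArg Complex.re ht
  simp only [Complex.mul_re, Complex.add_re, Complex.ofReal_re, Complex.intCast_re,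
    Complex.natCast_re, Complex.re_ofNat, Complex.ofReal_im, Complex.intCast_im,
    Complex.natCast_im, Complex.im_ofNat, Complex.add_im, Complex.mul_im] at this
  push_cast
  linarith

lemma sum_phase_pow (hN : 0 < N) {κ : ℝ} (hκ : ∀ z : ℤ, κ ≠ z) (j : ℤ) :
    ∑ m : Fin N, phase N (2 * (κ + j)) ^ (m : ℕ) =
      (Complex.exp (2 * π * I * κ) - 1) / (phase N (2 * (κ + j)) - 1) := by
  have hN' : (N : ℂ) ≠ 0 := Nat.cast_ne_zero.mpr hN.ne'
  rw [Fin.sum_univ_eq_sum_range (phase N (2 * (κ + j)) ^ ·),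
    geom_sum_eq (phase_two_mul_ne_one hN hκ j), ← phase_natCast_mul,
    phase_eq_of_eq_add j (y := 2 * N * κ) (by ring), phase]
  congr 2
  field_simp

end Phase

/-- The coefficient `λ_m` of the integer Doppler shift `Δ^m` in the expansion of `D_κ`. -/
noncomputable def fracDopplerCoeff (N : ℕ) (κ : ℝ) (m : ℤ) : ℂ :=
  (1 / N : ℂ) * (Complex.exp (2 * Real.pi * Complex.I * (κ : ℂ)) - 1) /
    (Complex.exp (2 * Real.pi * Complex.I * ((κ : ℂ) - (m : ℂ)) / N) - 1)

lemma fracDopplerCoeff_periodic {N : ℕ} (κ : ℝ) : Periodic (fracDopplerCoeff N κ) N := by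
  intro m
  simp only [fracDopplerCoeff, exp_two_pi_mul_I_mul_div_eq_phase]
  rw [phase_eq_of_eq_add (-1) (y := 2 * ((κ : ℂ) - (m : ℂ))) (by push_cast; ring)]

lemma Int.add_modEq_iff_modEq_sub {n a b c : ℤ} : a + b ≡ c [ZMOD n] ↔ a ≡ c - b [ZMOD n] :=
  ⟨fun h => by simpa using h.sub_right b, fun h => by simpa using h.add_right b⟩

lemma Int.eq_of_modEq_of_mem_Ico {n a x y : ℤ} (h : x ≡ y [ZMOD n]) (hx : x ∈ Ico a (a + n))
    (hy : y ∈ Ico a (a + n)) : x = y := by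
  rw [mem_Ico] at hx hy
  have := Int.eq_zero_of_abs_lt_dvd h.dvd (by rw [abs_lt]; constructor <;> omega)
  omega

lemma Fin.intCast_modEq_iff {N : ℕ} (p q : Fin N) : (p : ℤ) ≡ q [ZMOD N] ↔ p = q := by
  rw [Int.natCast_modEq_iff, Nat.ModEq, Nat.mod_eq_of_lt p.isLt, Nat.mod_eq_of_lt q.isLt,
    Fin.val_inj]

lemma Function.Periodic.eq_of_modEq {M : Type*} {G : ℤ → M} {n : ℤ} (hG : Periodic G n)
    {x y : ℤ} (h : x ≡ y [ZMOD n]) : G x = G y := by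
  obtain ⟨t, rfl⟩ := Int.modEq_iff_add_fac.mp h
  rw [mul_comm]
  exact (hG.int_mul t x).symm

section ResidueSums

variable {M : Type*} [AddCommMonoid M] {N : ℕ}

lemma sum_Ico_ite_modEq (hN : 0 < N) (a z : ℤ) {G : ℤ → M} (hG : Periodic G N) :
    ∑ m ∈ Ico a (a + N), (if m ≡ z [ZMOD N] then G m else 0) = G z := by
  have hmem : a + (z - a) % N ∈ Ico a (a + N) := by
    have := Int.emod_nonneg (z - a) (by omega : (N : ℤ) ≠ 0)
    have := Int.emod_lt_of_pos (z - a) (by omega : (0 : ℤ) < N)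
    rw [mem_Ico]
    omega
  have hz : a + (z - a) % N ≡ z [ZMOD N] := by
    simpa using (Int.mod_modEq (z - a) N).add_left a
  rw [sum_eq_single_of_mem _ hmem fun m hm hne =>
      if_neg fun h => hne (Int.eq_of_modEq_of_mem_Ico (h.trans hz.symm) hm hmem),
    if_pos hz, hG.eq_of_modEq hz]

lemma sum_fin_ite_modEq (hN : 0 < N) (z : ℤ) {G : ℤ → M} (hG : Periodic G N) :
    ∑ r : Fin N, (if (r : ℤ) ≡ z [ZMOD N] then G r else 0) = G z := by
  rw [← sum_Ico_ite_modEq hN 0 z hG, Int.Ico_eq_finset_map, sum_map,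
    Fin.sum_univ_eq_sum_range (fun r : ℕ => if (r : ℤ) ≡ z [ZMOD N] then G r else 0)]
  simp

end ResidueSums

lemma Matrix.zpow_eq_of_succ {n R : Type*} [Fintype n] [DecidableEq n] [CommRing R]
    {A : Matrix n n R} (hA : IsUnit A.det) {F : ℤ → Matrix n n R} (h0 : F 0 = 1)
    (hsucc : ∀ j, F (j + 1) = F j * A) : ∀ j, A ^ j = F j := by
  intro j
  induction j using Int.induction_on with
  | zero => rw [zpow_zero, h0]
  | succ j ih => rw [zpow_add_one hA, ih, hsucc]
  | pred j ih =>
    rw [zpow_sub_one hA, ih, ← sub_add_cancel (-(j : ℤ)) 1, hsucc, sub_add_cancel,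
      Matrix.mul_assoc, mul_nonsing_inv _ hA, Matrix.mul_one]

section Matrices

variable {N : ℕ}

lemma DeltaMat_zpow (j : ℤ) :
    DeltaMat N ^ j = diagonal fun n : Fin N => phase N (2 * j * (n : ℕ)) := by
  revert j
  refine Matrix.zpow_eq_of_succ ?_ (by simp [phase]) fun j => ?_
  · rw [DeltaMat, det_diagonal, isUnit_iff_ne_zero]
    exact prod_ne_zero_iff.mpr fun _ _ => Complex.exp_ne_zero _
  · rw [DeltaMat, diagonal_mul_diagonal]
    congr with n
    rw [exp_two_pi_mul_I_mul_div_eq_phase, ← phase_add]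
    push_cast
    ring_nf

lemma DFracMat_eq (κ : ℝ) :
    DFracMat N κ = diagonal fun n : Fin N => phase N (2 * κ * (n : ℕ)) := by
  rw [DFracMat]
  congr with n
  rw [phase]
  ring_nf

lemma PiMat_apply (p q : Fin N) :
    PiMat N p q = if (p : ℤ) ≡ q + 1 [ZMOD N] then 1 else 0 := by
  rw [PiMat, of_apply]
  congr 1
  rw [← Nat.cast_succ, Int.natCast_modEq_iff, Nat.ModEq, Nat.mod_eq_of_lt p.isLt]

lemma isUnit_det_PiMat (hN : 0 < N) : IsUnit (PiMat N).det := by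
  refine isUnit_det_of_left_inverse (B := (PiMat N)ᵀ) ?_
  ext p q
  simp only [mul_apply, transpose_apply, PiMat_apply, ite_mul, one_mul, zero_mul]
  rw [sum_fin_ite_modEq hN _ (G := fun r => if r ≡ q + 1 [ZMOD N] then 1 else 0)
    fun r => by simp only [Int.add_modulus_modEq_iff]]
  simp only [Int.add_modEq_iff_modEq_sub, add_sub_cancel_right, Fin.intCast_modEq_iff, one_apply]

lemma PiMat_zpow (hN : 0 < N) (j : ℤ) :
    PiMat N ^ j = of fun p q : Fin N => if (p : ℤ) ≡ q + j [ZMOD N] then 1 else 0 := by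
  revert j
  refine Matrix.zpow_eq_of_succ (isUnit_det_PiMat hN) ?_ fun j => ?_
  · ext p q
    simp only [add_zero, Fin.intCast_modEq_iff, one_apply, of_apply]
  · ext p q
    simp only [mul_apply, of_apply, PiMat_apply, mul_ite, mul_one, mul_zero]
    rw [sum_fin_ite_modEq hN _ (G := fun r => if (p : ℤ) ≡ r + j [ZMOD N] then 1 else 0)
      fun r => by simp only [add_right_comm r (N : ℤ), Int.modEq_add_modulus_iff]]
    simp only [add_right_comm (q : ℤ) 1 j, add_assoc]

lemma DeltaMat_zpow_mul_DFracMat_mul_PiMat_zpow_apply (hN : 0 < N) (k l : ℤ) (κ : ℝ)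
    (m n : Fin N) :
    (DeltaMat N ^ k * DFracMat N κ * PiMat N ^ l) m n =
      phase N (2 * (k + κ) * (m : ℕ)) * if (m : ℤ) ≡ n + l [ZMOD N] then 1 else 0 := by
  rw [DeltaMat_zpow, DFracMat_eq, PiMat_zpow hN, diagonal_mul_diagonal, diagonal_mul, of_apply,
    ← phase_add]
  ring_nf

noncomputable def fresnelKernel (N : ℕ) (x : ℤ) : ℂ :=
  (1 / √N : ℂ) * Complex.exp (-(π / 4) * I) * phase N ((x : ℂ) ^ 2)

lemma PhiMat_apply (p q : Fin N) : PhiMat N p q = fresnelKernel N (p - q) := by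
  rw [PhiMat, of_apply, fresnelKernel, phase]
  push_cast
  ring

lemma fresnelKernel_periodic (hN : Even N) : Periodic (fresnelKernel N) N := fun x => by
  simpa [fresnelKernel] using congrArg ((1 / √N : ℂ) * Complex.exp (-(π / 4) * I) * ·)
    (phase_intCast_mul_sq_periodic hN 1 x)

lemma fresnelKernel_mul_star (x y : ℤ) :
    fresnelKernel N x * star (fresnelKernel N y) =
      1 / N * phase N ((x : ℂ) ^ 2 - (y : ℂ) ^ 2) := by
  have hnorm : (1 / √N : ℂ) * Complex.exp (-(π / 4) * I) *
      star ((1 / √N : ℂ) * Complex.exp (-(π / 4) * I)) = 1 / N := by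
    rw [Complex.star_def, Complex.mul_conj, Complex.normSq_mul,
      Complex.normSq_eq_norm_sq (cexp _),
      show -(π / 4 : ℂ) * I = ((-(π / 4) : ℝ) : ℂ) * I by push_cast; ring,
      Complex.norm_exp_ofReal_mul_I]
    simp
  rw [fresnelKernel, fresnelKernel, star_mul', star_phase, sub_eq_add_neg, phase_add, ← hnorm]
  simp only [star_pow, star_intCast]
  ring

lemma PhiMat_mul_mul_conjTranspose_apply (hN : 0 < N) (hNeven : Even N)
    {A : Matrix (Fin N) (Fin N) ℂ} (a : Fin N → ℂ) (l : ℤ)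
    (hA : ∀ m n, A m n = a m * if (m : ℤ) ≡ n + l [ZMOD N] then 1 else 0) (p q : Fin N) :
    (PhiMat N * A * (PhiMat N)ᴴ) p q = 1 / N * ∑ m : Fin N,
      a m * phase N ((((p : ℤ) - m : ℤ) : ℂ) ^ 2 - (((q : ℤ) - m + l : ℤ) : ℂ) ^ 2) := by
  simp only [mul_apply, sum_mul, conjTranspose_apply, hA, PhiMat_apply]
  rw [sum_comm, mul_sum]
  refine sum_congr rfl fun m _ => ?_
  simp only [mul_ite, mul_one, mul_zero, ite_mul, zero_mul, Int.modEq_comm (a := (m : ℤ)),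
    Int.add_modEq_iff_modEq_sub]
  rw [sum_fin_ite_modEq hN _
      (G := fun n => fresnelKernel N (p - m) * a m * star (fresnelKernel N (q - n)))
      (((fresnelKernel_periodic hNeven).const_sub _).comp
        fun z => fresnelKernel N (p - m) * a m * star z),
    mul_right_comm, fresnelKernel_mul_star, sub_sub_eq_add_sub]
  ring_nf

lemma PhiMat_mul_path_mul_conjTranspose_apply (hN : 0 < N) (hNeven : Even N) {κ : ℝ}
    (hκ : ∀ z : ℤ, κ ≠ z) (k l : ℤ) (p q : Fin N) :
    (PhiMat N * (DeltaMat N ^ k * DFracMat N κ * PiMat N ^ l) * (PhiMat N)ᴴ) p q =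
      1 / N * phase N (((p : ℤ) - q - l : ℤ) * ((p : ℤ) + q + l : ℤ)) *
        ((Complex.exp (2 * π * I * κ) - 1) /
          (phase N (2 * (κ + (k - (p - q - l) : ℤ))) - 1)) := by
  rw [PhiMat_mul_mul_conjTranspose_apply hN hNeven _ l
      (DeltaMat_zpow_mul_DFracMat_mul_PiMat_zpow_apply hN k l κ), ← sum_phase_pow hN hκ,
    mul_assoc]
  congr 1
  rw [mul_sum]
  refine sum_congr rfl fun m _ => ?_
  rw [← phase_natCast_mul, ← phase_add, ← phase_add]
  congr 1
  push_cast
  ring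

/-- With Lean's floor division `[-N/2, N/2)` has exactly `N` elements for every `N`, so it is a
full residue system. -/
lemma sum_smul_DeltaMat_zpow_mul_PiMat_zpow_apply (hN : 0 < N) {c : ℤ → ℂ}
    (hc : Periodic c N) (k l : ℤ) (p q : Fin N) :
    (∑ m ∈ Icc (-(N : ℤ) / 2) ((N : ℤ) / 2 - 1),
        c m • (DeltaMat N ^ (k + m) * PiMat N ^ (k + m + l))) p q =
      c ((p : ℤ) - q - l - k) * phase N (2 * ((p : ℤ) - q - l : ℤ) * (p : ℕ)) := by
  have hcond (m : ℤ) : (p : ℤ) ≡ q + (k + m + l) [ZMOD N] ↔ m ≡ p - q - l - k [ZMOD N] := by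
    rw [Int.modEq_comm, show (q : ℤ) + (k + m + l) = m + (q + l + k) by ring,
      Int.add_modEq_iff_modEq_sub, sub_add_eq_sub_sub, sub_add_eq_sub_sub]
  have hphase : Periodic (fun m : ℤ => phase N (2 * (k + m : ℤ) * (p : ℕ))) N := fun m =>
    phase_eq_of_eq_add p (by push_cast; ring)
  rw [Icc_sub_one_right_eq_Ico, show (N : ℤ) / 2 = -(N : ℤ) / 2 + N by omega, Matrix.sum_apply]
  simp only [Matrix.smul_apply, DeltaMat_zpow, PiMat_zpow hN, diagonal_mul, of_apply,
    smul_eq_mul, mul_ite, mul_one, mul_zero, hcond]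
  rw [sum_Ico_ite_modEq hN _ _ (G := fun m => c m * phase N (2 * (k + m : ℤ) * (p : ℕ)))
    (hc.mul hphase), add_sub_cancel]

end Matrices

theorem stmt14 (N : ℕ) (hN : 0 < N) (hNeven : Even N) (κ : ℝ)
    (hκ : ∀ z : ℤ, κ ≠ (z : ℝ)) (k l : ℤ)
    (lam : ℤ → ℂ)
    (hlam : ∀ m : ℤ,
      lam m = (1 / N : ℂ) * (Complex.exp (2 * Real.pi * Complex.I * (κ : ℂ)) - 1) /
        (Complex.exp (2 * Real.pi * Complex.I * ((κ : ℂ) - (m : ℂ)) / N) - 1)) :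
    PhiMat N * (DeltaMat N ^ k * DFracMat N κ * PiMat N ^ l) * (PhiMat N)ᴴ =
      ∑ m ∈ Finset.Icc (-(N : ℤ) / 2) ((N : ℤ) / 2 - 1),
        (lam m * Complex.exp (-(Real.pi * Complex.I * ((k + m : ℤ) : ℂ) ^ 2 / N))) •
          (DeltaMat N ^ (k + m) * PiMat N ^ (k + m + l)) := by
  obtain rfl : lam = fracDopplerCoeff N κ := funext hlam
  have hc : Periodic (fun m : ℤ => fracDopplerCoeff N κ m *
      Complex.exp (-(π * I * ((k + m : ℤ) : ℂ) ^ 2 / N))) N :=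
    (fracDopplerCoeff_periodic κ).mul (exp_neg_sq_periodic hNeven k)
  ext p q
  rw [PhiMat_mul_path_mul_conjTranspose_apply hN hNeven hκ k l p q,
    sum_smul_DeltaMat_zpow_mul_PiMat_zpow_apply hN hc k l p q]
  set d : ℤ := (p : ℤ) - q - l with hd
  have hden : Complex.exp (2 * π * I * ((κ : ℂ) - ((d - k : ℤ) : ℂ)) / N) =
      phase N (2 * (κ + (k - d : ℤ))) := by
    rw [exp_two_pi_mul_I_mul_div_eq_phase]
    push_cast
    ring_nf
  have hchirp : Complex.exp (-(π * I * ((k + (d - k) : ℤ) : ℂ) ^ 2 / N)) *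
      phase N (2 * d * (p : ℕ)) = phase N (d * ((p : ℤ) + q + l : ℤ)) := by
    rw [add_sub_cancel, show -(π * I * (d : ℂ) ^ 2 / N) = π * I * (-(d : ℂ) ^ 2) / N by ring,
      ← phase, ← phase_add]
    congr 1
    push_cast [hd]
    ring
  simp only [fracDopplerCoeff, hden, mul_assoc _ _ (phase N _)]
  rw [hchirp]
  ring
end
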